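/- Consider the deterministic negotiation with agents A, B and atoms n0, n1, n2, nf, where n0 has one outcome sending both agents to n1; n1 has outcomes a (both agents to n2) and b (both agents to nf); n2 has outcomes a (both agents back to n1) and b (both agents to nf). One cannot add deterministic agents participating in n0, nf and possibly n1, n2 such that the resulting negotiation is sound and, under majority control, Player 1 controls n1 while Player 2 controls n2: in any such extension, after the occurrence sequence (n0)(n1,a), the added agents are each ready for exactly one of n1 or nf, and then one of the two outcomes of n2 leads to a deadlock. -/
import Mathlib


structure Negotiation (A Atom Out : Type*) where
  n0 : Atom
  nf : Atom
  parties : Atom → Finset A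
  parties_nonempty : ∀ n, (parties n).Nonempty
  mem_n0 : ∀ a, a ∈ parties n0
  mem_nf : ∀ a, a ∈ parties nf
  outcomes : Atom → Finset Out
  outcomes_nonempty : ∀ n, (outcomes n).Nonempty
  X : Atom → A → Out → Set Atom
  Xf_empty : ∀ a r, X nf a r = ∅
  X_nonempty : ∀ n a r, n ≠ nf → a ∈ parties n → r ∈ outcomes n → (X n a r).Nonempty

namespace Negotiation

variable {A Atom Out : Type*}

/-- A marking `x` enables atom `n` iff every party of `n` is ready to engage in `n`. -/
def Enables (N : Negotiation A Atom Out) (x : A → Set Atom) (n : Atom) : Prop :=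
  ∀ a ∈ N.parties n, n ∈ x a

open Classical in
/-- The marking obtained from `x` by the occurrence of `(n, r)`. -/
noncomputable def step (N : Negotiation A Atom Out) (x : A → Set Atom) (n : Atom) (r : Out) :
    A → Set Atom :=
  fun a => if a ∈ N.parties n then N.X n a r else x a

/-- The initial marking. -/
def x0 (N : Negotiation A Atom Out) : A → Set Atom := fun _ => {N.n0}

/-- The final marking. -/
def xf (N : Negotiation A Atom Out) : A → Set Atom := fun _ => ∅

/-- Reachability by a finite occurrence sequence. -/
inductive Reach (N : Negotiation A Atom Out) : (A → Set Atom) → (A → Set Atom) → Prop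
  | refl (x : A → Set Atom) : Reach N x x
  | tail {x y : A → Set Atom} (n : Atom) (r : Out) :
      Reach N x y → N.Enables y n → r ∈ N.outcomes n → Reach N x (N.step y n r)

/-- An agent is deterministic if it is always ready to engage in exactly one atom. -/
def Det (N : Negotiation A Atom Out) (a : A) : Prop :=
  ∀ n r, n ≠ N.nf → a ∈ N.parties n → r ∈ N.outcomes n → ∃ m, N.X n a r = {m}

/-- Weakly deterministic type 2: every atom has a deterministic party. -/
def WD2 (N : Negotiation A Atom Out) : Prop :=
  ∀ n : Atom, ∃ a ∈ N.parties n, N.Det a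

/-- Soundness: every atom can be enabled, and every occurrence sequence can be
extended to reach the final marking. -/
def Sound (N : Negotiation A Atom Out) : Prop :=
  (∀ n : Atom, ∃ x, N.Reach N.x0 x ∧ N.Enables x n) ∧
  (∀ x, N.Reach N.x0 x → N.Reach x N.xf)

/-- A set of atoms is independent if no two distinct atoms share an agent. -/
def Indep (N : Negotiation A Atom Out) (S : Finset Atom) : Prop :=
  ∀ n ∈ S, ∀ n' ∈ S, n ≠ n' → Disjoint (N.parties n) (N.parties n')

open Classical in
/-- Simultaneous occurrence of an independent set `S` of atoms, with outcomes `F`. -/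
noncomputable def execSet (N : Negotiation A Atom Out) (x : A → Set Atom)
    (S : Finset Atom) (F : Atom → Out) : A → Set Atom :=
  fun a => if ∃ n ∈ S, a ∈ N.parties n
    then ⋃ n ∈ S.filter (fun n => a ∈ N.parties n), N.X n a (F n)
    else x a

/-- One step of the attractor construction (`N1` = atoms of Player 1). -/
def AttStep (N : Negotiation A Atom Out) (N1 : Set Atom) (T : Set Atom) : Set Atom :=
  T ∪ {n | n ∈ N1 ∧ ∃ r ∈ N.outcomes n, ∀ a ∈ N.parties n, N.Det a → N.X n a r ⊆ T}
    ∪ {n | n ∉ N1 ∧ ∀ r ∈ N.outcomes n, ∀ a ∈ N.parties n, N.Det a → N.X n a r ⊆ T}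

/-- The attractor sequence `A_k` of the final atom. -/
def Att (N : Negotiation A Atom Out) (N1 : Set Atom) : ℕ → Set Atom
  | 0 => {N.nf}
  | k + 1 => N.AttStep N1 (N.Att N1 k)

/-- The attractor of the final atom. -/
def attractor (N : Negotiation A Atom Out) (N1 : Set Atom) : Set Atom :=
  ⋃ k, N.Att N1 k

/-- The attractor index of an atom: the least `k` with `n ∈ A_k`. -/
noncomputable def attIdx (N : Negotiation A Atom Out) (N1 : Set Atom) (n : Atom) : ℕ :=
  sInf {k | n ∈ N.Att N1 k}

/-- The sequence of markings along a play of the termination game. -/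
noncomputable def playMarks (N : Negotiation A Atom Out)
    (p : ℕ → Option (Finset Atom × (Atom → Out))) : ℕ → (A → Set Atom)
  | 0 => N.x0
  | k + 1 =>
    match p k with
    | some SF => N.execSet (playMarks N p k) SF.1 SF.2
    | none => playMarks N p k

/-- Validity of a play: at each step the Scheduler picks a nonempty independent set of
enabled atoms with outcomes chosen for them; the play stops only at markings
enabling no atom. -/
def ValidPlay (N : Negotiation A Atom Out)
    (p : ℕ → Option (Finset Atom × (Atom → Out))) : Prop :=
  ∀ k, (∀ S F, p k = some (S, F) →
          S.Nonempty ∧ N.Indep S ∧ ∀ n ∈ S, N.Enables (N.playMarks p k) n ∧ F n ∈ N.outcomes n)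
    ∧ (p k = none → p (k + 1) = none ∧ ∀ n, ¬ N.Enables (N.playMarks p k) n)

/-- A play ends with the occurrence of the final atom. -/
def EndsWithFinal (N : Negotiation A Atom Out)
    (p : ℕ → Option (Finset Atom × (Atom → Out))) : Prop :=
  ∃ k S F, p k = some (S, F) ∧ N.nf ∈ S

end Negotiation

/-- The four atoms of the negotiation on the left of Figure 3. -/
inductive FDAt : Type
  | n0 | n1 | n2 | nf
deriving DecidableEq


open Negotiation in
/-- If at marking `y` the first original agent is only ready for `c` but some party
`a0` of `c` is not ready for `c`, then the negotiation is stuck at `y` and cannot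
reach the final marking. -/
lemma stuck_aux {E : Type*} (M : Negotiation (Bool ⊕ E) FDAt Bool)
    (hAB : ∀ (b : Bool) (n : FDAt), Sum.inl b ∈ M.parties n)
    (y : (Bool ⊕ E) → Set FDAt) (c : FDAt) (a0 : Bool ⊕ E)
    (hy : y (Sum.inl true) = {c}) (ha0 : a0 ∈ M.parties c) (hc : c ∉ y a0) :
    ¬ M.Reach y M.xf := by
  intro h
  have key : ∀ z, M.Reach y z → z = y := by
    intro z hz
    induction hz with
    | refl => rfl
    | tail n r hr he ho ih =>
      exfalso
      rw [ih] at he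
      have hn : n = c := by
        have := he _ (hAB true n)
        rw [hy] at this
        exact Set.mem_singleton_iff.mp this
      subst hn
      exact hc (he a0 ha0)
  have h1 := key _ h
  have h2 : (M.xf : (Bool ⊕ E) → Set FDAt) (Sum.inl true) = {c} := by rw [h1, hy]
  have h3 : c ∈ (M.xf : (Bool ⊕ E) → Set FDAt) (Sum.inl true) := by
    rw [h2]; exact rfl
  simp [Negotiation.xf] at h3

open Negotiation in
/-- for the deterministic negotiation with agents `A`, `B` and atoms
`n0, n1, n2, nf` of Figure 3 (left), one cannot add deterministic agents
(participating in `n0`, `nf` and possibly `n1`, `n2`) so that the resulting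
negotiation is sound while, under majority control by a coalition `A1`, Player 1
controls `n1` and Player 2 controls `n2`. Agents are `Bool ⊕ E` (`inl` the two
original agents, `inr` the added ones), outcomes are `Bool` (`true` = a, `false` = b). -/
theorem no_deterministic_control_extension {E : Type*} [DecidableEq E]
    (M : Negotiation (Bool ⊕ E) FDAt Bool)
    (hn0 : M.n0 = FDAt.n0) (hnf : M.nf = FDAt.nf)
    -- the two original agents participate in every atom
    (hAB : ∀ (b : Bool) (n : FDAt), Sum.inl b ∈ M.parties n)
    -- outcomes as in the figure
    (hO0 : M.outcomes FDAt.n0 = {true})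
    (hO1 : M.outcomes FDAt.n1 = {true, false})
    (hO2 : M.outcomes FDAt.n2 = {true, false})
    -- transitions of the two original agents as in the figure
    (hX0 : ∀ b : Bool, M.X FDAt.n0 (Sum.inl b) true = {FDAt.n1})
    (hX1a : ∀ b : Bool, M.X FDAt.n1 (Sum.inl b) true = {FDAt.n2})
    (hX1b : ∀ b : Bool, M.X FDAt.n1 (Sum.inl b) false = {FDAt.nf})
    (hX2a : ∀ b : Bool, M.X FDAt.n2 (Sum.inl b) true = {FDAt.n1})
    (hX2b : ∀ b : Bool, M.X FDAt.n2 (Sum.inl b) false = {FDAt.nf})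
    -- all agents (including the added ones) are deterministic
    (hdet : ∀ ag : Bool ⊕ E, M.Det ag)
    -- the coalition `A1` has strict majority in `n1` but not in `n2`
    (A1 : Finset (Bool ⊕ E))
    (hc1 : (M.parties FDAt.n1).card < 2 * ((M.parties FDAt.n1) ∩ A1).card)
    (hc2 : ¬ (M.parties FDAt.n2).card < 2 * ((M.parties FDAt.n2) ∩ A1).card) :
    ¬ M.Sound := by
  intro hs
  have hreach := hs.2
  have hp0 : ∀ a, a ∈ M.parties FDAt.n0 := by
    intro a; have := M.mem_n0 a; rwa [hn0] at this
  have hpf : ∀ a, a ∈ M.parties FDAt.nf := by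
    intro a; have := M.mem_nf a; rwa [hnf] at this
  have hstep : ∀ (x : (Bool ⊕ E) → Set FDAt) n r a, a ∈ M.parties n →
      M.step x n r a = M.X n a r := by
    intro x n r a h; simp [Negotiation.step, h]
  have hstep' : ∀ (x : (Bool ⊕ E) → Set FDAt) n r a, a ∉ M.parties n →
      M.step x n r a = x a := by
    intro x n r a h; simp [Negotiation.step, h]
  have ho0 : true ∈ M.outcomes FDAt.n0 := by rw [hO0]; exact Finset.mem_singleton_self _
  have ho1t : true ∈ M.outcomes FDAt.n1 := by rw [hO1]; simp
  have ho1f : false ∈ M.outcomes FDAt.n1 := by rw [hO1]; simp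
  have ho2t : true ∈ M.outcomes FDAt.n2 := by rw [hO2]; simp
  have ho2f : false ∈ M.outcomes FDAt.n2 := by rw [hO2]; simp
  -- markings
  set x1 := M.step M.x0 FDAt.n0 true with hx1def
  set x2a := M.step x1 FDAt.n1 true with hx2adef
  set x2b := M.step x1 FDAt.n1 false with hx2bdef
  set x3a := M.step x2a FDAt.n2 true with hx3adef
  set x3b := M.step x2a FDAt.n2 false with hx3bdef
  -- reach x1
  have en0 : M.Enables M.x0 FDAt.n0 := by
    intro a _; show FDAt.n0 ∈ M.x0 a; simp [Negotiation.x0, hn0]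
  have r1 : M.Reach M.x0 x1 := Reach.tail _ _ (Reach.refl _) en0 ho0
  have hx1 : ∀ a, x1 a = M.X FDAt.n0 a true := fun a => hstep _ _ _ _ (hp0 a)
  have hx1l : x1 (Sum.inl true) = {FDAt.n1} := by rw [hx1, hX0]
  -- n1 is enabled at x1
  have en1 : M.Enables x1 FDAt.n1 := by
    intro a ha
    by_contra hcon
    exact stuck_aux M hAB x1 FDAt.n1 a hx1l ha hcon (hreach x1 r1)
  have r2a : M.Reach M.x0 x2a := Reach.tail _ _ r1 en1 ho1t
  have r2b : M.Reach M.x0 x2b := Reach.tail _ _ r1 en1 ho1f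
  have hx2al : x2a (Sum.inl true) = {FDAt.n2} := by
    rw [hx2adef, hstep _ _ _ _ (hAB true FDAt.n1), hX1a]
  have hx2bl : x2b (Sum.inl true) = {FDAt.nf} := by
    rw [hx2bdef, hstep _ _ _ _ (hAB true FDAt.n1), hX1b]
  -- everyone is at nf after (n0)(n1,b)
  have F2 : ∀ a, FDAt.nf ∈ x2b a := by
    intro a
    by_contra hcon
    exact stuck_aux M hAB x2b FDAt.nf a hx2bl (hpf a) hcon (hreach x2b r2b)
  -- n2 is enabled at x2a
  have en2 : M.Enables x2a FDAt.n2 := by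
    intro a ha
    by_contra hcon
    exact stuck_aux M hAB x2a FDAt.n2 a hx2al ha hcon (hreach x2a r2a)
  have r3a : M.Reach M.x0 x3a := Reach.tail _ _ r2a en2 ho2t
  have r3b : M.Reach M.x0 x3b := Reach.tail _ _ r2a en2 ho2f
  have hx3al : x3a (Sum.inl true) = {FDAt.n1} := by
    rw [hx3adef, hstep _ _ _ _ (hAB true FDAt.n2), hX2a]
  have hx3bl : x3b (Sum.inl true) = {FDAt.nf} := by
    rw [hx3bdef, hstep _ _ _ _ (hAB true FDAt.n2), hX2b]
  -- everyone is at nf after (n0)(n1,a)(n2,b)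
  have F4 : ∀ a, FDAt.nf ∈ x3b a := by
    intro a
    by_contra hcon
    exact stuck_aux M hAB x3b FDAt.nf a hx3bl (hpf a) hcon (hreach x3b r3b)
  -- n1 is enabled at x3a
  have en1' : M.Enables x3a FDAt.n1 := by
    intro a ha
    by_contra hcon
    exact stuck_aux M hAB x3a FDAt.n1 a hx3al ha hcon (hreach x3a r3a)
  -- parties of n1 and n2 coincide
  have hne1 : FDAt.n1 ≠ M.nf := by rw [hnf]; decide
  have hne2 : FDAt.n2 ≠ M.nf := by rw [hnf]; decide
  have hne0 : FDAt.n0 ≠ M.nf := by rw [hnf]; decide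
  have hsub21 : ∀ a, a ∈ M.parties FDAt.n2 → a ∈ M.parties FDAt.n1 := by
    intro a ha2
    by_contra ha1
    obtain ⟨m, hm⟩ := hdet a FDAt.n0 true hne0 (hp0 a) ho0
    have h1 : FDAt.n2 ∈ x1 a := by
      have := en2 a ha2
      rwa [hx2adef, hstep' _ _ _ _ ha1] at this
    have h2 : FDAt.nf ∈ x1 a := by
      have := F2 a
      rwa [hx2bdef, hstep' _ _ _ _ ha1] at this
    rw [hx1, hm] at h1 h2
    rw [Set.mem_singleton_iff] at h1 h2
    rw [← h1] at h2
    exact absurd h2 (by decide)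
  have hsub12 : ∀ a, a ∈ M.parties FDAt.n1 → a ∈ M.parties FDAt.n2 := by
    intro a ha1
    by_contra ha2
    obtain ⟨m, hm⟩ := hdet a FDAt.n1 true hne1 ha1 ho1t
    have h1 : FDAt.n1 ∈ x2a a := by
      have := en1' a ha1
      rwa [hx3adef, hstep' _ _ _ _ ha2] at this
    have h2 : FDAt.nf ∈ x2a a := by
      have := F4 a
      rwa [hx3bdef, hstep' _ _ _ _ ha2] at this
    rw [hx2adef, hstep _ _ _ _ ha1, hm] at h1 h2
    rw [Set.mem_singleton_iff] at h1 h2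
    rw [← h1] at h2
    exact absurd h2 (by decide)
  have hpp : M.parties FDAt.n1 = M.parties FDAt.n2 :=
    Finset.ext fun a => ⟨hsub12 a, hsub21 a⟩
  rw [hpp] at hc1
  exact hc2 hc1
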